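/- arXiv:2202.05812 — 3 statements merged into one kernel-verified Lean document; each statement's English description precedes it below -/
import Mathlib

section
/- Let {u_k} be a nonnegative sequence, a ≥ 0, ω₁, ω₂ ≥ 0 and η ∈ (0,1), and suppose u_k ≤ (ω₁ + k·a + ω₂ ∑_{r=0}^{k−1} u_r) η^k for all k ≥ 0. Then for every ν ∈ (η, 1), u_k / ν^k → 0 as k → ∞; in particular u_k converges to 0 at a linear (geometric) rate. -/
open Filter

/-- If `u k ≤ (ω₁ + k a + ω₂ ∑_{r<k} u r) η^k` with `η ∈ (0,1)` and nonnegative data,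
then `u k / ν^k → 0` for every `ν ∈ (η, 1)`; in particular `u` decays geometrically. -/
theorem geometric_decay_of_selfbounded (u : ℕ → ℝ) (hu : ∀ k, 0 ≤ u k)
    (a ω₁ ω₂ η : ℝ) (ha : 0 ≤ a) (hω₁ : 0 ≤ ω₁) (hω₂ : 0 ≤ ω₂)
    (hη : η ∈ Set.Ioo (0 : ℝ) 1)
    (hrec : ∀ k, u k ≤ (ω₁ + k * a + ω₂ * ∑ r ∈ Finset.range k, u r) * η ^ k) :
    ∀ ν ∈ Set.Ioo η 1, Tendsto (fun k => u k / ν ^ k) atTop (nhds 0) := by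
  obtain ⟨hη0, hη1⟩ := hη
  set c : ℕ → ℝ := fun k => (ω₁ + k * a) * η ^ k with hc
  have hcnn : ∀ k, 0 ≤ c k := fun k => by
    have : (0:ℝ) ≤ (k:ℝ) * a := by positivity
    positivity
  have hcsum : Summable c := by
    have h1 : Summable (fun k : ℕ => ω₁ * η ^ k) :=
      (summable_geometric_of_lt_one hη0.le hη1).mul_left ω₁
    have h2 : Summable (fun k : ℕ => a * ((k:ℝ) ^ 1 * η ^ k)) := by
      have := summable_pow_mul_geometric_of_norm_lt_one (R := ℝ) 1
        (r := η) (by rw [Real.norm_eq_abs, abs_of_pos hη0]; exact hη1)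
      exact this.mul_left a
    have : Summable (fun k : ℕ => ω₁ * η ^ k + a * ((k:ℝ) ^ 1 * η ^ k)) := h1.add h2
    refine this.congr fun k => ?_
    simp [hc]; ring
  set T : ℝ := ∑' k, c k with hT
  -- Gronwall: partial sums bounded
  have key : ∀ n, ∑ r ∈ Finset.range n, u r ≤
      (∏ j ∈ Finset.range n, (1 + ω₂ * η ^ j)) * ∑ k ∈ Finset.range n, c k := by
    intro n
    induction n with
    | zero => simp
    | succ n ih =>
      have hprod1 : (1:ℝ) ≤ ∏ j ∈ Finset.range n, (1 + ω₂ * η ^ j) := by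
        calc (1:ℝ) = ∏ _j ∈ Finset.range n, 1 := by simp
          _ ≤ ∏ j ∈ Finset.range n, (1 + ω₂ * η ^ j) :=
            Finset.prod_le_prod (fun j _ => zero_le_one) (fun j _ => by nlinarith [pow_pos hη0 j])
      have hd : (0:ℝ) ≤ ω₂ * η ^ n := by positivity
      rw [Finset.sum_range_succ, Finset.sum_range_succ, Finset.prod_range_succ]
      have hsnn : (0:ℝ) ≤ ∑ r ∈ Finset.range n, u r :=
        Finset.sum_nonneg fun r _ => hu r
      have hstep : u n ≤ c n + (ω₂ * η ^ n) * ∑ r ∈ Finset.range n, u r := by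
        have := hrec n
        calc u n ≤ (ω₁ + n * a + ω₂ * ∑ r ∈ Finset.range n, u r) * η ^ n := this
          _ = c n + (ω₂ * η ^ n) * ∑ r ∈ Finset.range n, u r := by simp [hc]; ring
      have hcsnn : (0:ℝ) ≤ ∑ k ∈ Finset.range n, c k :=
        Finset.sum_nonneg fun k _ => hcnn k
      calc (∑ r ∈ Finset.range n, u r) + u n
          ≤ (∑ r ∈ Finset.range n, u r) + (c n + (ω₂ * η ^ n) * ∑ r ∈ Finset.range n, u r) := by
            linarith [hstep]
        _ = (1 + ω₂ * η ^ n) * ∑ r ∈ Finset.range n, u r + c n := by ring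
        _ ≤ (1 + ω₂ * η ^ n) * ((∏ j ∈ Finset.range n, (1 + ω₂ * η ^ j)) *
              ∑ k ∈ Finset.range n, c k) + c n := by
            have h1 : (0:ℝ) ≤ 1 + ω₂ * η ^ n := by linarith
            nlinarith [ih]
        _ ≤ (∏ j ∈ Finset.range n, (1 + ω₂ * η ^ j)) * (1 + ω₂ * η ^ n) *
              ((∑ k ∈ Finset.range n, c k) + c n) := by
            have hcn : 0 ≤ c n := hcnn n
            have h : (1:ℝ) ≤ (∏ j ∈ Finset.range n, (1 + ω₂ * η ^ j)) * (1 + ω₂ * η ^ n) := by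
              nlinarith
            nlinarith [mul_le_mul_of_nonneg_left h hcn]
  -- bound the product by exp(ω₂/(1-η))
  set M : ℝ := Real.exp (ω₂ / (1 - η)) * T with hM
  have hSle : ∀ n, ∑ r ∈ Finset.range n, u r ≤ M := by
    intro n
    have hprod : (∏ j ∈ Finset.range n, (1 + ω₂ * η ^ j)) ≤ Real.exp (ω₂ / (1 - η)) := by
      have h1 : (∏ j ∈ Finset.range n, (1 + ω₂ * η ^ j)) ≤
          ∏ j ∈ Finset.range n, Real.exp (ω₂ * η ^ j) := by
        apply Finset.prod_le_prod
        · intro j _; nlinarith [pow_pos hη0 j]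
        · intro j _; linarith [Real.add_one_le_exp (ω₂ * η ^ j)]
      have h2 : ∏ j ∈ Finset.range n, Real.exp (ω₂ * η ^ j) =
          Real.exp (∑ j ∈ Finset.range n, ω₂ * η ^ j) := (Real.exp_sum _ _).symm
      have h3 : ∑ j ∈ Finset.range n, ω₂ * η ^ j ≤ ω₂ / (1 - η) := by
        rw [← Finset.mul_sum]
        have hgeo : ∑ j ∈ Finset.range n, η ^ j ≤ (1 - η)⁻¹ := by
          have hs : Summable (fun j : ℕ => η ^ j) :=
            summable_geometric_of_lt_one hη0.le hη1
          have := Summable.sum_le_tsum (Finset.range n) (fun j _ => (pow_pos hη0 j).le) hs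
          rwa [tsum_geometric_of_lt_one hη0.le hη1] at this
        calc ω₂ * ∑ j ∈ Finset.range n, η ^ j ≤ ω₂ * (1 - η)⁻¹ :=
              mul_le_mul_of_nonneg_left hgeo hω₂
          _ = ω₂ / (1 - η) := by rw [div_eq_mul_inv]
      calc (∏ j ∈ Finset.range n, (1 + ω₂ * η ^ j)) ≤
            Real.exp (∑ j ∈ Finset.range n, ω₂ * η ^ j) := h1.trans_eq h2
        _ ≤ Real.exp (ω₂ / (1 - η)) := Real.exp_le_exp.mpr h3
    have hsum : ∑ k ∈ Finset.range n, c k ≤ T :=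
      Summable.sum_le_tsum (Finset.range n) (fun k _ => hcnn k) hcsum
    have hcsnn : (0:ℝ) ≤ ∑ k ∈ Finset.range n, c k :=
      Finset.sum_nonneg fun k _ => hcnn k
    have hprodnn : (0:ℝ) ≤ ∏ j ∈ Finset.range n, (1 + ω₂ * η ^ j) :=
      Finset.prod_nonneg fun j _ => by nlinarith [pow_pos hη0 j]
    calc ∑ r ∈ Finset.range n, u r ≤
        (∏ j ∈ Finset.range n, (1 + ω₂ * η ^ j)) * ∑ k ∈ Finset.range n, c k := key n
      _ ≤ Real.exp (ω₂ / (1 - η)) * T := by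
          apply mul_le_mul hprod hsum hcsnn (Real.exp_pos _).le
  have hM0 : 0 ≤ M := le_trans (by simp) (hSle 0)
  -- now the main limit
  intro ν hν
  obtain ⟨hνη, hν1⟩ := hν
  have hν0 : 0 < ν := lt_trans hη0 hνη
  have hr0 : 0 ≤ η / ν := by positivity
  have hr1 : η / ν < 1 := (div_lt_one hν0).mpr hνη
  have hgsum : Summable (fun k : ℕ => (ω₁ + ω₂ * M + k * a) * (η / ν) ^ k) := by
    have h1 : Summable (fun k : ℕ => (ω₁ + ω₂ * M) * (η / ν) ^ k) :=
      (summable_geometric_of_lt_one hr0 hr1).mul_left _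
    have h2 : Summable (fun k : ℕ => a * ((k:ℝ) ^ 1 * (η / ν) ^ k)) :=
      (summable_pow_mul_geometric_of_norm_lt_one (R := ℝ) 1
        (r := η / ν) (by rw [Real.norm_eq_abs, abs_of_nonneg hr0]; exact hr1)).mul_left a
    exact ((h1.add h2).congr fun k => by ring)
  have hgtend : Tendsto (fun k : ℕ => (ω₁ + ω₂ * M + k * a) * (η / ν) ^ k) atTop (nhds 0) :=
    hgsum.tendsto_atTop_zero
  apply squeeze_zero (fun k => div_nonneg (hu k) (pow_nonneg hν0.le k)) _ hgtend
  intro k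
  have hνk : (0:ℝ) < ν ^ k := pow_pos hν0 k
  rw [div_le_iff₀ hνk]
  have hb : u k ≤ (ω₁ + k * a + ω₂ * M) * η ^ k := by
    have h1 := hrec k
    have h2 : ω₂ * ∑ r ∈ Finset.range k, u r ≤ ω₂ * M :=
      mul_le_mul_of_nonneg_left (hSle k) hω₂
    have hηk : (0:ℝ) < η ^ k := pow_pos hη0 k
    nlinarith
  calc u k ≤ (ω₁ + k * a + ω₂ * M) * η ^ k := hb
    _ = (ω₁ + ω₂ * M + k * a) * (η / ν) ^ k * ν ^ k := by
        rw [div_pow]; field_simp; ring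
end

section
/- Let W ∈ ℝ^{n×n} with ρ(W − W^∞) < 1 where W^∞ := (1/n)𝟙𝟙ᵀ, and W doubly stochastic. For stepsizes α = β, the matrix M̃₀ obtained by setting α = 0 in the GT-GDA-Lite error system — a block matrix whose diagonal blocks are W̄₁ := (W − W^∞)⊗I_{p_x}, I_{p_x}, W̄₁, W̄₂ := (W − W^∞)⊗I_{p_y}, I_{p_y}, W̄₂, and which is block lower-triangular up to the structure given — has spectral radius exactly 1, with the eigenvalue 1 being semi-simple of multiplicity p_x + p_y. -/
open Matrix Kronecker

variable {n px py : ℕ}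

/-- Index type for the `6 × 6` block error system of GT-GDA-Lite. -/
abbrev GTIdx (n px py : ℕ) :=
  ((Fin n × Fin px) ⊕ Fin px ⊕ (Fin n × Fin px)) ⊕
    ((Fin n × Fin py) ⊕ Fin py ⊕ (Fin n × Fin py))

/-- The GT-GDA-Lite error system matrix at stepsize `α = 0`: block diagonal entries
`W̄⊗I, I, W̄⊗I, W̄⊗I, I, W̄⊗I` together with the four "don't care" blocks at positions
`(3,1), (3,4), (6,1), (6,4)`, and zeros elsewhere. -/
noncomputable def gtM (W Winf : Matrix (Fin n) (Fin n) ℝ)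
    (X31 : Matrix (Fin n × Fin px) (Fin n × Fin px) ℝ)
    (X34 : Matrix (Fin n × Fin px) (Fin n × Fin py) ℝ)
    (X61 : Matrix (Fin n × Fin py) (Fin n × Fin px) ℝ)
    (X64 : Matrix (Fin n × Fin py) (Fin n × Fin py) ℝ) :
    Matrix (GTIdx n px py) (GTIdx n px py) ℝ := fun i j =>
  match i, j with
  | .inl (.inl a), .inl (.inl b) => ((W - Winf) ⊗ₖ (1 : Matrix (Fin px) (Fin px) ℝ)) a b
  | .inl (.inr (.inl a)), .inl (.inr (.inl b)) => (1 : Matrix (Fin px) (Fin px) ℝ) a b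
  | .inl (.inr (.inr a)), .inl (.inr (.inr b)) =>
      ((W - Winf) ⊗ₖ (1 : Matrix (Fin px) (Fin px) ℝ)) a b
  | .inl (.inr (.inr a)), .inl (.inl b) => X31 a b
  | .inl (.inr (.inr a)), .inr (.inl b) => X34 a b
  | .inr (.inl a), .inr (.inl b) => ((W - Winf) ⊗ₖ (1 : Matrix (Fin py) (Fin py) ℝ)) a b
  | .inr (.inr (.inl a)), .inr (.inr (.inl b)) => (1 : Matrix (Fin py) (Fin py) ℝ) a b
  | .inr (.inr (.inr a)), .inr (.inr (.inr b)) =>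
      ((W - Winf) ⊗ₖ (1 : Matrix (Fin py) (Fin py) ℝ)) a b
  | .inr (.inr (.inr a)), .inl (.inl b) => X61 a b
  | .inr (.inr (.inr a)), .inr (.inl b) => X64 a b
  | _, _ => 0


lemma kron_mulVec_slice {p : ℕ} (A : Matrix (Fin n) (Fin n) ℝ)
    (u : Fin n × Fin p → ℂ) (a : Fin n) (j : Fin p) :
    ((A ⊗ₖ (1 : Matrix (Fin p) (Fin p) ℝ)).map (algebraMap ℝ ℂ)).mulVec u (a, j)
      = (A.map (algebraMap ℝ ℂ)).mulVec (fun b => u (b, j)) a := by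
  simp [Matrix.mulVec, dotProduct, Fintype.sum_prod_type, Matrix.one_apply,
    mul_ite, ite_mul, mul_zero, zero_mul, apply_ite ((↑·) : ℝ → ℂ), Finset.sum_ite_eq]

lemma kron_eig_zero {p : ℕ} (W Winf : Matrix (Fin n) (Fin n) ℝ)
    (hspec : ∀ μ ∈ spectrum ℂ ((W - Winf).map (algebraMap ℝ ℂ)), ‖μ‖ < 1)
    (μ : ℂ) (hμ : 1 ≤ ‖μ‖) (u : Fin n × Fin p → ℂ)
    (hu : (((W - Winf) ⊗ₖ (1 : Matrix (Fin p) (Fin p) ℝ)).map (algebraMap ℝ ℂ)).mulVec u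
        = μ • u) :
    u = 0 := by
  set Wc := (W - Winf).map (algebraMap ℝ ℂ) with hWc
  have hnot : μ ∉ spectrum ℂ Wc := fun h => absurd (hspec μ h) (not_lt.2 hμ)
  have hunit : IsUnit ((algebraMap ℂ (Matrix (Fin n) (Fin n) ℂ)) μ - Wc) :=
    spectrum.notMem_iff.mp hnot
  funext ⟨b, j⟩
  have hslice : ((algebraMap ℂ (Matrix (Fin n) (Fin n) ℂ)) μ - Wc).mulVec
      (fun b => u (b, j)) = 0 := by
    funext a
    have h := congrFun hu (a, j)
    rw [kron_mulVec_slice] at h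
    rw [← hWc] at h
    rw [Algebra.algebraMap_eq_smul_one, Matrix.sub_mulVec, Matrix.smul_mulVec,
      Matrix.one_mulVec]
    simp only [Pi.sub_apply, Pi.smul_apply, h, Pi.zero_apply]
    simp
  have hinj := Matrix.mulVec_injective_iff_isUnit.mpr hunit
  have hz : (fun b => u (b, j)) = 0 := hinj (show _ = Matrix.mulVec _ 0 by
    rw [hslice, Matrix.mulVec_zero])
  exact congrFun hz b


section rows
variable (W Winf : Matrix (Fin n) (Fin n) ℝ)
    (X31 : Matrix (Fin n × Fin px) (Fin n × Fin px) ℝ)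
    (X34 : Matrix (Fin n × Fin px) (Fin n × Fin py) ℝ)
    (X61 : Matrix (Fin n × Fin py) (Fin n × Fin px) ℝ)
    (X64 : Matrix (Fin n × Fin py) (Fin n × Fin py) ℝ)
    (v : GTIdx n px py → ℂ)

lemma gt_row1 (a : Fin n × Fin px) :
    ((gtM W Winf X31 X34 X61 X64).map (algebraMap ℝ ℂ)).mulVec v (.inl (.inl a)) =
    (((W - Winf) ⊗ₖ (1 : Matrix (Fin px) (Fin px) ℝ)).map (algebraMap ℝ ℂ)).mulVec
      (fun b => v (.inl (.inl b))) a := by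
  simp [Matrix.mulVec, dotProduct, Fintype.sum_sum_type, gtM]

lemma gt_row2 (a : Fin px) :
    ((gtM W Winf X31 X34 X61 X64).map (algebraMap ℝ ℂ)).mulVec v (.inl (.inr (.inl a))) =
    v (.inl (.inr (.inl a))) := by
  simp [Matrix.mulVec, dotProduct, Fintype.sum_sum_type, gtM, Matrix.one_apply,
    apply_ite ((↑·) : ℝ → ℂ), ite_mul, zero_mul, Finset.sum_ite_eq]

lemma gt_row3 (a : Fin n × Fin px) :
    ((gtM W Winf X31 X34 X61 X64).map (algebraMap ℝ ℂ)).mulVec v (.inl (.inr (.inr a))) =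
    (X31.map (algebraMap ℝ ℂ)).mulVec (fun b => v (.inl (.inl b))) a +
    (((W - Winf) ⊗ₖ (1 : Matrix (Fin px) (Fin px) ℝ)).map (algebraMap ℝ ℂ)).mulVec
      (fun b => v (.inl (.inr (.inr b)))) a +
    (X34.map (algebraMap ℝ ℂ)).mulVec (fun b => v (.inr (.inl b))) a := by
  simp [Matrix.mulVec, dotProduct, Fintype.sum_sum_type, gtM]

lemma gt_row4 (a : Fin n × Fin py) :
    ((gtM W Winf X31 X34 X61 X64).map (algebraMap ℝ ℂ)).mulVec v (.inr (.inl a)) =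
    (((W - Winf) ⊗ₖ (1 : Matrix (Fin py) (Fin py) ℝ)).map (algebraMap ℝ ℂ)).mulVec
      (fun b => v (.inr (.inl b))) a := by
  simp [Matrix.mulVec, dotProduct, Fintype.sum_sum_type, gtM]

lemma gt_row5 (a : Fin py) :
    ((gtM W Winf X31 X34 X61 X64).map (algebraMap ℝ ℂ)).mulVec v (.inr (.inr (.inl a))) =
    v (.inr (.inr (.inl a))) := by
  simp [Matrix.mulVec, dotProduct, Fintype.sum_sum_type, gtM, Matrix.one_apply,
    apply_ite ((↑·) : ℝ → ℂ), ite_mul, zero_mul, Finset.sum_ite_eq]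

lemma gt_row6 (a : Fin n × Fin py) :
    ((gtM W Winf X31 X34 X61 X64).map (algebraMap ℝ ℂ)).mulVec v (.inr (.inr (.inr a))) =
    (X61.map (algebraMap ℝ ℂ)).mulVec (fun b => v (.inl (.inl b))) a +
    (((W - Winf) ⊗ₖ (1 : Matrix (Fin py) (Fin py) ℝ)).map (algebraMap ℝ ℂ)).mulVec
      (fun b => v (.inr (.inr (.inr b)))) a +
    (X64.map (algebraMap ℝ ℂ)).mulVec (fun b => v (.inr (.inl b))) a := by
  simp [Matrix.mulVec, dotProduct, Fintype.sum_sum_type, gtM]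
  ring

end rows

lemma gt_fixed_iff
    (W Winf : Matrix (Fin n) (Fin n) ℝ)
    (hspec : ∀ μ ∈ spectrum ℂ ((W - Winf).map (algebraMap ℝ ℂ)), ‖μ‖ < 1)
    (X31 : Matrix (Fin n × Fin px) (Fin n × Fin px) ℝ)
    (X34 : Matrix (Fin n × Fin px) (Fin n × Fin py) ℝ)
    (X61 : Matrix (Fin n × Fin py) (Fin n × Fin px) ℝ)
    (X64 : Matrix (Fin n × Fin py) (Fin n × Fin py) ℝ)
    (v : GTIdx n px py → ℂ) :
    ((gtM W Winf X31 X34 X61 X64).map (algebraMap ℝ ℂ)).mulVec v = v ↔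
      ((fun b => v (.inl (.inl b))) = 0 ∧ (fun b => v (.inl (.inr (.inr b)))) = 0 ∧
       (fun b => v (.inr (.inl b))) = 0 ∧ (fun b => v (.inr (.inr (.inr b)))) = 0) := by
  constructor
  · intro h
    have h1 : (fun b => v (.inl (.inl b))) = 0 := by
      apply kron_eig_zero W Winf hspec 1 (by norm_num)
      funext a
      have hh := congrFun h (Sum.inl (Sum.inl a))
      rw [gt_row1] at hh
      simpa using hh
    have h4 : (fun b => v (.inr (.inl b))) = 0 := by
      apply kron_eig_zero W Winf hspec 1 (by norm_num)
      funext a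
      have hh := congrFun h (Sum.inr (Sum.inl a))
      rw [gt_row4] at hh
      simpa using hh
    have h3 : (fun b => v (.inl (.inr (.inr b)))) = 0 := by
      apply kron_eig_zero W Winf hspec 1 (by norm_num)
      funext a
      have hh := congrFun h (Sum.inl (Sum.inr (Sum.inr a)))
      rw [gt_row3, h1, h4, Matrix.mulVec_zero, Matrix.mulVec_zero] at hh
      simpa using hh
    have h6 : (fun b => v (.inr (.inr (.inr b)))) = 0 := by
      apply kron_eig_zero W Winf hspec 1 (by norm_num)
      funext a
      have hh := congrFun h (Sum.inr (Sum.inr (Sum.inr a)))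
      rw [gt_row6, h1, h4, Matrix.mulVec_zero, Matrix.mulVec_zero] at hh
      simpa using hh
    exact ⟨h1, h3, h4, h6⟩
  · rintro ⟨h1, h3, h4, h6⟩
    funext i
    rcases i with ((a | a | a) | (a | a | a))
    · rw [gt_row1, h1, Matrix.mulVec_zero]
      exact (congrFun h1 a).symm
    · rw [gt_row2]
    · rw [gt_row3, h1, h3, h4, Matrix.mulVec_zero, Matrix.mulVec_zero, Matrix.mulVec_zero]
      simpa using (congrFun h3 a).symm
    · rw [gt_row4, h4, Matrix.mulVec_zero]
      exact (congrFun h4 a).symm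
    · rw [gt_row5]
    · rw [gt_row6, h1, h4, h6, Matrix.mulVec_zero, Matrix.mulVec_zero, Matrix.mulVec_zero]
      simpa using (congrFun h6 a).symm

/-- Embedding of the free components (blocks 2 and 5) into the full state space. -/
def gtL (n px py : ℕ) : ((Fin px → ℂ) × (Fin py → ℂ)) →ₗ[ℂ] (GTIdx n px py → ℂ) where
  toFun p i :=
    match i with
    | .inl (.inr (.inl a)) => p.1 a
    | .inr (.inr (.inl a)) => p.2 a
    | _ => 0
  map_add' p q := by funext i; rcases i with ((a | a | a) | (a | a | a)) <;> simp
  map_smul' c p := by funext i; rcases i with ((a | a | a) | (a | a | a)) <;> simp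

lemma gtL_injective : Function.Injective (gtL n px py) := by
  intro p q h
  have h1 : ∀ a, p.1 a = q.1 a := fun a => congrFun h (Sum.inl (Sum.inr (Sum.inl a)))
  have h2 : ∀ a, p.2 a = q.2 a := fun a => congrFun h (Sum.inr (Sum.inr (Sum.inl a)))
  exact Prod.ext (funext h1) (funext h2)


/-- The matrix `M̃₀` has spectral radius exactly `1`, and the eigenvalue `1` is semi-simple of
multiplicity `p_x + p_y`. -/
theorem gtM_spectral (hpx : 0 < px) (hpy : 0 < py)
    (W Winf : Matrix (Fin n) (Fin n) ℝ)
    (hWinf : Winf = Matrix.of fun _ _ => (1 : ℝ) / n)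
    (hrow : W.mulVec (fun _ => 1) = fun _ => 1)
    (hcol : Matrix.vecMul (fun _ => 1) W = fun _ => 1)
    (hspec : ∀ μ ∈ spectrum ℂ ((W - Winf).map (algebraMap ℝ ℂ)), ‖μ‖ < 1)
    (X31 : Matrix (Fin n × Fin px) (Fin n × Fin px) ℝ)
    (X34 : Matrix (Fin n × Fin px) (Fin n × Fin py) ℝ)
    (X61 : Matrix (Fin n × Fin py) (Fin n × Fin px) ℝ)
    (X64 : Matrix (Fin n × Fin py) (Fin n × Fin py) ℝ) :
    (∀ μ ∈ spectrum ℂ ((gtM W Winf X31 X34 X61 X64).map (algebraMap ℝ ℂ)), ‖μ‖ ≤ 1) ∧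
    (1 : ℂ) ∈ spectrum ℂ ((gtM W Winf X31 X34 X61 X64).map (algebraMap ℝ ℂ)) ∧
    (Module.finrank ℂ
        (LinearMap.ker (((gtM W Winf X31 X34 X61 X64).map (algebraMap ℝ ℂ)).toLin'
          - LinearMap.id)) = px + py) ∧
    (LinearMap.ker
        ((((gtM W Winf X31 X34 X61 X64).map (algebraMap ℝ ℂ)).toLin' - LinearMap.id) ∘ₗ
          (((gtM W Winf X31 X34 X61 X64).map (algebraMap ℝ ℂ)).toLin' - LinearMap.id)) =
      LinearMap.ker
        (((gtM W Winf X31 X34 X61 X64).map (algebraMap ℝ ℂ)).toLin' - LinearMap.id)) := by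

  refine ⟨?_, ?_, ?_, ?_⟩
  · -- spectral radius bound
    intro μ hμ
    by_contra hgt
    push_neg at hgt
    rw [spectrum.mem_iff] at hμ
    have hdet : (algebraMap ℂ (Matrix (GTIdx n px py) (GTIdx n px py) ℂ) μ -
        (gtM W Winf X31 X34 X61 X64).map (algebraMap ℝ ℂ)).det = 0 := by
      by_contra hd
      exact hμ ((Matrix.isUnit_iff_isUnit_det _).mpr (isUnit_iff_ne_zero.mpr hd))
    obtain ⟨v, hv0, hv⟩ := (Matrix.exists_mulVec_eq_zero_iff).mpr hdet
    rw [Algebra.algebraMap_eq_smul_one, Matrix.sub_mulVec, Matrix.smul_mulVec,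
      Matrix.one_mulVec, sub_eq_zero] at hv
    -- hv : μ • v = Mc.mulVec v
    have hμ1 : (1 : ℝ) ≤ ‖μ‖ := le_of_lt hgt
    have hne1 : μ ≠ 1 := by
      intro h
      rw [h] at hgt
      simp at hgt
    have h1 : (fun b => v (.inl (.inl b))) = 0 := by
      apply kron_eig_zero W Winf hspec μ hμ1
      funext a
      have hh := congrFun hv (Sum.inl (Sum.inl a))
      rw [gt_row1] at hh
      simpa using hh.symm
    have h4 : (fun b => v (.inr (.inl b))) = 0 := by
      apply kron_eig_zero W Winf hspec μ hμ1
      funext a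
      have hh := congrFun hv (Sum.inr (Sum.inl a))
      rw [gt_row4] at hh
      simpa using hh.symm
    have h3 : (fun b => v (.inl (.inr (.inr b)))) = 0 := by
      apply kron_eig_zero W Winf hspec μ hμ1
      funext a
      have hh := congrFun hv (Sum.inl (Sum.inr (Sum.inr a)))
      rw [gt_row3, h1, h4, Matrix.mulVec_zero, Matrix.mulVec_zero] at hh
      simpa using hh.symm
    have h6 : (fun b => v (.inr (.inr (.inr b)))) = 0 := by
      apply kron_eig_zero W Winf hspec μ hμ1
      funext a
      have hh := congrFun hv (Sum.inr (Sum.inr (Sum.inr a)))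
      rw [gt_row6, h1, h4, Matrix.mulVec_zero, Matrix.mulVec_zero] at hh
      simpa using hh.symm
    have h2 : ∀ a, v (Sum.inl (Sum.inr (Sum.inl a))) = 0 := by
      intro a
      have hh := congrFun hv (Sum.inl (Sum.inr (Sum.inl a)))
      rw [gt_row2] at hh
      have : (μ - 1) * v (Sum.inl (Sum.inr (Sum.inl a))) = 0 := by
        have := hh
        simp only [Pi.smul_apply, smul_eq_mul] at this
        linear_combination this
      rcases mul_eq_zero.mp this with h | h
      · exact absurd (by linear_combination h : μ = 1) hne1
      · exact h
    have h5 : ∀ a, v (Sum.inr (Sum.inr (Sum.inl a))) = 0 := by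
      intro a
      have hh := congrFun hv (Sum.inr (Sum.inr (Sum.inl a)))
      rw [gt_row5] at hh
      have : (μ - 1) * v (Sum.inr (Sum.inr (Sum.inl a))) = 0 := by
        have := hh
        simp only [Pi.smul_apply, smul_eq_mul] at this
        linear_combination this
      rcases mul_eq_zero.mp this with h | h
      · exact absurd (by linear_combination h : μ = 1) hne1
      · exact h
    apply hv0
    funext i
    rcases i with ((a | a | a) | (a | a | a))
    · exact congrFun h1 a
    · exact h2 a
    · exact congrFun h3 a
    · exact congrFun h4 a
    · exact h5 a
    · exact congrFun h6 a
  · -- 1 is an eigenvalue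
    rw [spectrum.mem_iff]
    intro hunit
    classical
    let v0 : GTIdx n px py → ℂ := fun i =>
      match i with
      | .inl (.inr (.inl _)) => 1
      | _ => 0
    have hfix : ((gtM W Winf X31 X34 X61 X64).map (algebraMap ℝ ℂ)).mulVec v0 = v0 := by
      rw [gt_fixed_iff W Winf hspec]
      exact ⟨rfl, rfl, rfl, rfl⟩
    have hz : (algebraMap ℂ (Matrix (GTIdx n px py) (GTIdx n px py) ℂ) 1 -
          (gtM W Winf X31 X34 X61 X64).map (algebraMap ℝ ℂ)).mulVec v0 =
        (algebraMap ℂ (Matrix (GTIdx n px py) (GTIdx n px py) ℂ) 1 -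
          (gtM W Winf X31 X34 X61 X64).map (algebraMap ℝ ℂ)).mulVec 0 := by
      rw [Matrix.mulVec_zero, Algebra.algebraMap_eq_smul_one, Matrix.sub_mulVec,
        Matrix.smul_mulVec, Matrix.one_mulVec, hfix]
      simp
    have hv00 := Matrix.mulVec_injective_iff_isUnit.mpr hunit hz
    exact one_ne_zero (congrFun hv00 (Sum.inl (Sum.inr (Sum.inl ⟨0, hpx⟩))))
  · -- dimension of the eigenspace
    have kerEq : LinearMap.ker (((gtM W Winf X31 X34 X61 X64).map (algebraMap ℝ ℂ)).toLin'
        - LinearMap.id) = LinearMap.range (gtL n px py) := by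
      ext v
      rw [LinearMap.mem_ker, LinearMap.mem_range]
      constructor
      · intro h
        have hv : ((gtM W Winf X31 X34 X61 X64).map (algebraMap ℝ ℂ)).mulVec v = v := by
          rwa [LinearMap.sub_apply, Matrix.toLin'_apply, LinearMap.id_apply, sub_eq_zero] at h
        rw [gt_fixed_iff W Winf hspec] at hv
        obtain ⟨h1, h3, h4, h6⟩ := hv
        refine ⟨(fun a => v (.inl (.inr (.inl a))), fun a => v (.inr (.inr (.inl a)))), ?_⟩
        funext i
        rcases i with ((a | a | a) | (a | a | a))
        · exact (congrFun h1 a).symm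
        · rfl
        · exact (congrFun h3 a).symm
        · exact (congrFun h4 a).symm
        · rfl
        · exact (congrFun h6 a).symm
      · rintro ⟨p, rfl⟩
        rw [LinearMap.sub_apply, Matrix.toLin'_apply, LinearMap.id_apply, sub_eq_zero,
          gt_fixed_iff W Winf hspec]
        exact ⟨rfl, rfl, rfl, rfl⟩
    rw [kerEq, LinearMap.finrank_range_of_inj gtL_injective, Module.finrank_prod,
      Module.finrank_fin_fun, Module.finrank_fin_fun]
  · -- semi-simplicity
    ext v
    simp only [LinearMap.mem_ker, LinearMap.comp_apply]
    constructor
    · intro h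
      set T : (GTIdx n px py → ℂ) →ₗ[ℂ] (GTIdx n px py → ℂ) :=
        ((gtM W Winf X31 X34 X61 X64).map (algebraMap ℝ ℂ)).toLin' - LinearMap.id with hT
      have hform : ∀ (w : GTIdx n px py → ℂ) (i : GTIdx n px py),
          T w i = ((gtM W Winf X31 X34 X61 X64).map (algebraMap ℝ ℂ)).mulVec w i - w i := by
        intro w i
        rw [hT]
        simp [Matrix.toLin'_apply]
      set u : GTIdx n px py → ℂ := T v with huDef
      have h0 : T u = 0 := h
      have hufix : ((gtM W Winf X31 X34 X61 X64).map (algebraMap ℝ ℂ)).mulVec u = u := by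
        funext i
        have hh := congrFun h0 i
        rw [hform] at hh
        exact sub_eq_zero.mp hh
      rw [gt_fixed_iff W Winf hspec] at hufix
      obtain ⟨h1, h3, h4, h6⟩ := hufix
      have h2 : ∀ a, u (Sum.inl (Sum.inr (Sum.inl a))) = 0 := by
        intro a
        rw [huDef, hform, gt_row2, sub_self]
      have h5 : ∀ a, u (Sum.inr (Sum.inr (Sum.inl a))) = 0 := by
        intro a
        rw [huDef, hform, gt_row5, sub_self]
      show u = 0
      funext i
      rcases i with ((a | a | a) | (a | a | a))
      · exact congrFun h1 a
      · exact h2 a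
      · exact congrFun h3 a
      · exact congrFun h4 a
      · exact h5 a
      · exact congrFun h6 a
    · intro h
      rw [h, map_zero]
end

section
/- Let M_α = M₀ + αM′ + o(α) be a matrix family depending smoothly on α ≥ 0, where λ₀ = 1 is a semi-simple eigenvalue of M₀ of multiplicity l with right eigenvector matrix R and left eigenvector matrix L normalized so that L R = I_l, and all other eigenvalues of M₀ have modulus strictly less than 1. If every eigenvalue of S := L M′ R has strictly negative real part, then there exists ᾱ > 0 such that ρ(M_α) < 1 for all α ∈ (0, ᾱ). -/
open Matrix Asymptotics

variable {N l : ℕ}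

-- entry-sum bound for mulVec in sup norm
lemma mulVec_norm_le {m n : ℕ} (A : Matrix (Fin m) (Fin n) ℂ) (v : Fin n → ℂ) :
    ‖A.mulVec v‖ ≤ (∑ i, ∑ j, ‖A i j‖) * ‖v‖ := by
  have hnn : 0 ≤ (∑ i, ∑ j, ‖A i j‖) * ‖v‖ :=
    mul_nonneg (Finset.sum_nonneg fun i _ => Finset.sum_nonneg fun j _ => norm_nonneg _)
      (norm_nonneg _)
  rw [pi_norm_le_iff_of_nonneg hnn]
  intro i
  calc ‖A.mulVec v i‖ = ‖∑ j, A i j * v j‖ := by rfl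
    _ ≤ ∑ j, ‖A i j * v j‖ := norm_sum_le _ _
    _ ≤ ∑ j, ‖A i j‖ * ‖v‖ := by
        refine Finset.sum_le_sum fun j _ => ?_
        rw [norm_mul]
        exact mul_le_mul_of_nonneg_left (norm_le_pi_norm v j) (norm_nonneg _)
    _ = (∑ j, ‖A i j‖) * ‖v‖ := by rw [Finset.sum_mul]
    _ ≤ (∑ i, ∑ j, ‖A i j‖) * ‖v‖ := by
        refine mul_le_mul_of_nonneg_right ?_ (norm_nonneg _)
        exact Finset.single_le_sum (f := fun i => ∑ j, ‖A i j‖)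
          (fun i _ => Finset.sum_nonneg fun j _ => norm_nonneg _) (Finset.mem_univ i)

lemma entry_sum_nonneg {m n : ℕ} (A : Matrix (Fin m) (Fin n) ℂ) :
    0 ≤ ∑ i, ∑ j, ‖A i j‖ :=
  Finset.sum_nonneg fun i _ => Finset.sum_nonneg fun j _ => norm_nonneg _

lemma pos_min_on_compact {X : Type*} [TopologicalSpace X] {K : Set X} (hK : IsCompact K)
    {f : X → ℝ} (hf : ContinuousOn f K) (hpos : ∀ x ∈ K, 0 < f x) :
    ∃ ε > 0, ∀ x ∈ K, ε ≤ f x := by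
  rcases K.eq_empty_or_nonempty with h | h
  · exact ⟨1, one_pos, by simp [h]⟩
  · obtain ⟨x, hx, hmin⟩ := hK.exists_isMinOn h hf
    exact ⟨f x, hpos x hx, fun y hy => hmin hy⟩

lemma mem_spectrum_iff_exists {n : ℕ} (A : Matrix (Fin n) (Fin n) ℂ) (μ : ℂ) :
    μ ∈ spectrum ℂ A ↔ ∃ v, v ≠ 0 ∧ A.mulVec v = μ • v := by
  rw [← AlgEquiv.spectrum_eq (Matrix.toLinAlgEquiv' : Matrix (Fin n) (Fin n) ℂ ≃ₐ[ℂ] _) A,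
    ← Module.End.hasEigenvalue_iff_mem_spectrum]
  constructor
  · intro h
    obtain ⟨v, hv⟩ := h.exists_hasEigenvector
    refine ⟨v, hv.2, ?_⟩
    have := Module.End.mem_eigenspace_iff.1 hv.1
    simpa using this
  · rintro ⟨v, hv0, hv⟩
    exact Module.End.hasEigenvalue_of_hasEigenvector
      ⟨Module.End.mem_eigenspace_iff.2 (by simpa using hv), hv0⟩

lemma gap_lemma {l : ℕ} (S : Matrix (Fin l) (Fin l) ℂ)
    (hS : ∀ μ ∈ spectrum ℂ S, μ.re < 0) :
    ∃ δ > 0, ∃ ε > 0, ε ≤ 1 ∧ ∀ ν : ℂ, ∀ x : Fin l → ℂ, ‖x‖ = 1 → -δ ≤ ν.re →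
      ε ≤ ‖S.mulVec x - ν • x‖ := by
  obtain ⟨δ, hδ, hδspec⟩ : ∃ δ > 0, ∀ μ ∈ spectrum ℂ S, μ.re < -δ := by
    have hfin := Matrix.finite_spectrum (R := ℂ) S
    rcases Set.eq_empty_or_nonempty (spectrum ℂ S) with h | h
    · exact ⟨1, one_pos, by simp [h]⟩
    · set F := hfin.toFinset with hF
      have hFne : F.Nonempty := by
        rwa [hF, Set.Finite.toFinset_nonempty]
      set m := (F.image Complex.re).max' (hFne.image _) with hm
      have hmem : ∃ μ ∈ spectrum ℂ S, μ.re = m := by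
        obtain ⟨r, hr, hrm⟩ := Finset.mem_image.1 ((F.image Complex.re).max'_mem (hFne.image _))
        exact ⟨r, (Set.Finite.mem_toFinset hfin).1 hr, hrm⟩
      obtain ⟨μ₀, hμ₀, hμ₀m⟩ := hmem
      have hmneg : m < 0 := hμ₀m ▸ hS μ₀ hμ₀
      refine ⟨-m/2, by linarith, fun μ hμ => ?_⟩
      have : μ.re ≤ m := Finset.le_max' _ _
        (Finset.mem_image.2 ⟨μ, (Set.Finite.mem_toFinset hfin).2 hμ, rfl⟩)
      linarith
  set CS := ∑ i, ∑ j, ‖S i j‖ with hCS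
  have hCS0 : 0 ≤ CS := entry_sum_nonneg S
  set K : Set (ℂ × (Fin l → ℂ)) :=
    {p | p.1 ∈ Metric.closedBall 0 (CS + 1) ∧ -δ ≤ p.1.re ∧ p.2 ∈ Metric.sphere 0 1} with hK
  have hcont : Continuous fun p : ℂ × (Fin l → ℂ) => S.mulVec p.2 - p.1 • p.2 := by
    exact ((S.mulVecLin.continuous_of_finiteDimensional).comp continuous_snd).sub
      (continuous_fst.smul continuous_snd)
  have hKcomp : IsCompact K := by
    refine ((isCompact_closedBall (0:ℂ) (CS+1)).prod
      (isCompact_sphere (0 : Fin l → ℂ) 1)).of_isClosed_subset ?_ ?_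
    · have h1 : IsClosed {p : ℂ × (Fin l → ℂ) | p.1 ∈ Metric.closedBall 0 (CS+1)} :=
        Metric.isClosed_closedBall.preimage continuous_fst
      have h2 : IsClosed {p : ℂ × (Fin l → ℂ) | -δ ≤ p.1.re} :=
        isClosed_le continuous_const (Complex.continuous_re.comp continuous_fst)
      have h3 : IsClosed {p : ℂ × (Fin l → ℂ) | p.2 ∈ Metric.sphere 0 1} :=
        Metric.isClosed_sphere.preimage continuous_snd
      exact h1.inter (h2.inter h3)
    · intro p hp; exact Set.mem_prod.2 ⟨hp.1, hp.2.2⟩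
  have hposK : ∀ p ∈ K, 0 < ‖S.mulVec p.2 - p.1 • p.2‖ := by
    rintro ⟨ν, x⟩ ⟨-, hre, hx⟩
    simp only [Function.comp] at *
    rw [norm_pos_iff]
    intro heq
    have hx1 : ‖x‖ = 1 := by simpa using hx
    have hx0 : x ≠ 0 := by intro h; rw [h] at hx1; simp at hx1
    have : ν ∈ spectrum ℂ S := (mem_spectrum_iff_exists S ν).2 ⟨x, hx0, by
      have := sub_eq_zero.1 heq; exact this⟩
    have := hδspec ν this
    linarith
  obtain ⟨ε', hε', hεK⟩ := pos_min_on_compact hKcomp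
    ((continuous_norm.comp hcont).continuousOn) hposK
  refine ⟨δ, hδ, min ε' 1, lt_min hε' one_pos, min_le_right _ _, fun ν x hx hre => ?_⟩
  by_cases hν : ‖ν‖ ≤ CS + 1
  · refine le_trans (min_le_left _ _) ?_
    exact hεK (ν, x) ⟨by simpa [Metric.mem_closedBall] using hν, hre,
      by simpa [Metric.mem_sphere] using hx⟩
  · push_neg at hν
    have h1 : ‖S.mulVec x‖ ≤ CS := by
      have := mulVec_norm_le S x; rwa [hx, mul_one] at this
    have h2 : ‖ν • x‖ = ‖ν‖ := by rw [norm_smul, hx, mul_one]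
    have h3 : ‖ν‖ - CS ≤ ‖S.mulVec x - ν • x‖ := by
      calc ‖ν‖ - CS ≤ ‖ν • x‖ - ‖S.mulVec x‖ := by rw [h2]; linarith
        _ ≤ ‖ν • x - S.mulVec x‖ := norm_sub_norm_le _ _
        _ = ‖S.mulVec x - ν • x‖ := norm_sub_rev _ _
    exact le_trans (min_le_right _ _) (by linarith)

lemma ker_sub_range {N l : ℕ} (M₀c : Matrix (Fin N) (Fin N) ℂ) (Lc : Matrix (Fin l) (Fin N) ℂ)
    (Rc : Matrix (Fin N) (Fin l) ℂ) (hLR : Lc * Rc = 1) (hright : M₀c * Rc = Rc)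
    (hmult : Module.finrank ℂ (LinearMap.ker (M₀c.toLin' - LinearMap.id)) = l) :
    ∀ w : Fin N → ℂ, M₀c.mulVec w = w → ∃ y, w = Rc.mulVec y := by
  set f := M₀c.toLin' - LinearMap.id with hf
  set rng := LinearMap.range (Matrix.toLin' Rc) with hrng
  have hinj : Function.Injective (Matrix.toLin' Rc) := by
    intro a b h
    have h2 := congrArg (Matrix.toLin' Lc) h
    rwa [← Matrix.toLin'_mul_apply, ← Matrix.toLin'_mul_apply, hLR, Matrix.toLin'_one,
      LinearMap.id_apply, LinearMap.id_apply] at h2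
  have hrank : Module.finrank ℂ rng = l := by
    rw [hrng, LinearMap.finrank_range_of_inj hinj, Module.finrank_fin_fun]
  have hle : rng ≤ LinearMap.ker f := by
    rintro _ ⟨y, rfl⟩
    rw [LinearMap.mem_ker, hf, LinearMap.sub_apply, LinearMap.id_apply,
      ← Matrix.toLin'_mul_apply, hright, sub_self]
  have heq : rng = LinearMap.ker f := Submodule.eq_of_le_of_finrank_le hle (by rw [hmult, hrank])
  intro w hw
  have hwk : w ∈ LinearMap.ker f := by
    rw [LinearMap.mem_ker, hf, LinearMap.sub_apply, LinearMap.id_apply, Matrix.toLin'_apply, hw,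
      sub_self]
  rw [← heq] at hwk
  obtain ⟨y, hy⟩ := hwk
  exact ⟨y, by rw [← hy, Matrix.toLin'_apply]⟩

set_option maxHeartbeats 2000000 in
/-- Perturbation of a semi-simple eigenvalue: if `M_α = M₀ + α M′ + o(α)`, the eigenvalue `1`
of `M₀` is semi-simple of multiplicity `l` with right/left eigenvector matrices `R`, `L`
normalized by `L R = I`, all other eigenvalues of `M₀` lie strictly inside the unit circle, and
every eigenvalue of `S := L M′ R` has negative real part, then `ρ(M_α) < 1` for all small
`α > 0`. -/
theorem semisimple_perturbation
    (M : ℝ → Matrix (Fin N) (Fin N) ℝ) (M₀ M' : Matrix (Fin N) (Fin N) ℝ)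
    (hM₀ : M 0 = M₀)
    (hsmooth : ∀ i j, (fun α => M α i j - M₀ i j - α * M' i j)
      =o[nhdsWithin 0 (Set.Ici 0)] fun α : ℝ => α)
    (L : Matrix (Fin l) (Fin N) ℝ) (R : Matrix (Fin N) (Fin l) ℝ)
    (hLR : L * R = 1) (hright : M₀ * R = R) (hleft : L * M₀ = L)
    (hmult : Module.finrank ℂ
      (LinearMap.ker ((M₀.map (algebraMap ℝ ℂ)).toLin' - LinearMap.id)) = l)
    (hsemisimple : LinearMap.ker
        (((M₀.map (algebraMap ℝ ℂ)).toLin' - LinearMap.id) ∘ₗ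
          ((M₀.map (algebraMap ℝ ℂ)).toLin' - LinearMap.id)) =
      LinearMap.ker ((M₀.map (algebraMap ℝ ℂ)).toLin' - LinearMap.id))
    (hothers : ∀ μ ∈ spectrum ℂ (M₀.map (algebraMap ℝ ℂ)), μ = 1 ∨ ‖μ‖ < 1)
    (hS : ∀ μ ∈ spectrum ℂ ((L * M' * R).map (algebraMap ℝ ℂ)), μ.re < 0) :
    ∃ αbar > 0, ∀ α ∈ Set.Ioo (0 : ℝ) αbar,
      ∀ μ ∈ spectrum ℂ ((M α).map (algebraMap ℝ ℂ)), ‖μ‖ < 1 := by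
  classical
  set φ : ℝ →+* ℂ := algebraMap ℝ ℂ with hφ
  set M₀c := M₀.map φ with hM₀c
  set M'c := M'.map φ with hM'c
  set Lc := L.map φ with hLc
  set Rc := R.map φ with hRc
  set Sc := (L * M' * R).map φ with hSc
  have hLRc : Lc * Rc = 1 := by
    rw [hLc, hRc, ← Matrix.map_mul, hLR, Matrix.map_one φ (map_zero φ) (map_one φ)]
  have hrightc : M₀c * Rc = Rc := by rw [hM₀c, hRc, ← Matrix.map_mul, hright]
  have hleftc : Lc * M₀c = Lc := by rw [hLc, hM₀c, ← Matrix.map_mul, hleft]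
  have hScc : Sc = Lc * M'c * Rc := by rw [hSc, hLc, hM'c, hRc, ← Matrix.map_mul, ← Matrix.map_mul]
  -- constants
  set CL := ∑ i, ∑ j, ‖Lc i j‖ with hCL
  set CR := ∑ i, ∑ j, ‖Rc i j‖ with hCRdef
  set CM' := ∑ i, ∑ j, ‖M'c i j‖ with hCM'
  set CM₀ := ∑ i, ∑ j, ‖M₀c i j‖ with hCM₀
  set CSc := ∑ i, ∑ j, ‖Sc i j‖ with hCSc
  clear_value CL CR CM' CM₀ CSc
  have hCL0 : 0 ≤ CL := hCL ▸ entry_sum_nonneg _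
  have hCR0 : 0 ≤ CR := hCRdef ▸ entry_sum_nonneg _
  have hCM'0 : 0 ≤ CM' := hCM' ▸ entry_sum_nonneg _
  have hCM₀0 : 0 ≤ CM₀ := hCM₀ ▸ entry_sum_nonneg _
  have hCSc0 : 0 ≤ CSc := hCSc ▸ entry_sum_nonneg _
  obtain ⟨δ, hδ, εS, hεS, hεS1, hgap⟩ := gap_lemma Sc hS
  -- the constant c for the complement estimate
  obtain ⟨c, hc, hcest⟩ :
      ∃ c > 0, ∀ w : Fin N → ℂ, Lc.mulVec w = 0 → c * ‖w‖ ≤ ‖M₀c.mulVec w - w‖ := by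
    set K1 : Set (Fin N → ℂ) := {w | w ∈ Metric.sphere (0 : Fin N → ℂ) 1 ∧ Lc.mulVec w = 0}
      with hK1
    have hK1comp : IsCompact K1 := by
      refine (isCompact_sphere (0 : Fin N → ℂ) 1).of_isClosed_subset ?_ (fun w hw => hw.1)
      have h1 : IsClosed {w : Fin N → ℂ | w ∈ Metric.sphere (0 : Fin N → ℂ) 1} :=
        Metric.isClosed_sphere
      have h2 : IsClosed {w : Fin N → ℂ | Lc.mulVec w = 0} := by
        have : Continuous fun w : Fin N → ℂ => Lc.mulVec w := by
          exact Lc.mulVecLin.continuous_of_finiteDimensional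
        exact isClosed_eq this continuous_const
      exact h1.inter h2
    have hcont : Continuous fun w : Fin N → ℂ => ‖M₀c.mulVec w - w‖ := by
      exact (((M₀c.mulVecLin.continuous_of_finiteDimensional).sub continuous_id).norm)
    have hpos : ∀ w ∈ K1, 0 < ‖M₀c.mulVec w - w‖ := by
      rintro w ⟨hw1, hw2⟩
      rw [norm_pos_iff]
      intro heq
      have hfix : M₀c.mulVec w = w := sub_eq_zero.1 heq
      obtain ⟨y, hy⟩ := ker_sub_range M₀c Lc Rc hLRc hrightc hmult w hfix
      have hy0 : y = 0 := by
        have := hw2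
        rw [hy, Matrix.mulVec_mulVec, hLRc, Matrix.one_mulVec] at this
        exact this
      have : w = 0 := by rw [hy, hy0, Matrix.mulVec_zero]
      rw [this] at hw1
      simp at hw1
    obtain ⟨c, hc, hcmin⟩ := pos_min_on_compact hK1comp hcont.continuousOn hpos
    refine ⟨c, hc, fun w hw => ?_⟩
    rcases eq_or_ne w 0 with rfl | hw0
    · simp
    · have hnw : 0 < ‖w‖ := norm_pos_iff.2 hw0
      have hmem : (‖w‖⁻¹ • w) ∈ K1 := by
        constructor
        · simp [norm_smul, inv_mul_cancel₀ (ne_of_gt hnw)]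
        · rw [Matrix.mulVec_smul, hw, smul_zero]
      have := hcmin _ hmem
      rw [Matrix.mulVec_smul, ← smul_sub, norm_smul] at this
      simp only [norm_inv, norm_norm] at this
      rw [mul_comm]
      calc ‖w‖ * c ≤ ‖w‖ * (‖w‖⁻¹ * ‖M₀c.mulVec w - w‖) :=
        mul_le_mul_of_nonneg_left this (le_of_lt hnw)
      _ = ‖M₀c.mulVec w - w‖ := by field_simp
  -- the constant d for the region away from 1
  set B := CM₀ + 1 with hB
  obtain ⟨d, hd, hdest⟩ :
      ∃ d > 0, ∀ μ : ℂ, 1 ≤ ‖μ‖ → ‖μ‖ ≤ B → c/2 ≤ ‖μ - 1‖ →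
        ∀ v : Fin N → ℂ, ‖v‖ = 1 → d ≤ ‖M₀c.mulVec v - μ • v‖ := by
    set K2 : Set (ℂ × (Fin N → ℂ)) := {p | 1 ≤ ‖p.1‖ ∧ ‖p.1‖ ≤ B ∧ c/2 ≤ ‖p.1 - 1‖ ∧
      p.2 ∈ Metric.sphere (0 : Fin N → ℂ) 1} with hK2
    have hcont : Continuous fun p : ℂ × (Fin N → ℂ) => M₀c.mulVec p.2 - p.1 • p.2 :=
      ((M₀c.mulVecLin.continuous_of_finiteDimensional).comp continuous_snd).sub
        (continuous_fst.smul continuous_snd)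
    have hK2comp : IsCompact K2 := by
      refine ((isCompact_closedBall (0:ℂ) B).prod
        (isCompact_sphere (0 : Fin N → ℂ) 1)).of_isClosed_subset ?_ ?_
      · have h1 : IsClosed {p : ℂ × (Fin N → ℂ) | 1 ≤ ‖p.1‖} :=
          isClosed_le continuous_const (continuous_fst.norm)
        have h2 : IsClosed {p : ℂ × (Fin N → ℂ) | ‖p.1‖ ≤ B} :=
          isClosed_le (continuous_fst.norm) continuous_const
        have h3 : IsClosed {p : ℂ × (Fin N → ℂ) | c/2 ≤ ‖p.1 - 1‖} :=
          isClosed_le continuous_const ((continuous_fst.sub continuous_const).norm)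
        have h4 : IsClosed {p : ℂ × (Fin N → ℂ) | p.2 ∈ Metric.sphere (0 : Fin N → ℂ) 1} :=
          Metric.isClosed_sphere.preimage continuous_snd
        exact h1.inter (h2.inter (h3.inter h4))
      · rintro p ⟨-, h2, -, h4⟩
        exact Set.mem_prod.2 ⟨by simpa [Metric.mem_closedBall] using h2, h4⟩
    have hpos : ∀ p ∈ K2, 0 < ‖M₀c.mulVec p.2 - p.1 • p.2‖ := by
      rintro ⟨μ, v⟩ ⟨h1, h2, h3, h4⟩
      rw [norm_pos_iff]
      intro heq
      have hv1 : ‖v‖ = 1 := by simpa using h4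
      have hv0 : v ≠ 0 := fun h => by rw [h] at hv1; simp at hv1
      have hμspec : μ ∈ spectrum ℂ M₀c :=
        (mem_spectrum_iff_exists M₀c μ).2 ⟨v, hv0, sub_eq_zero.1 heq⟩
      rcases hothers μ hμspec with h | h
      · rw [h] at h3; simp at h3; linarith
      · linarith
    obtain ⟨d, hd, hdmin⟩ := pos_min_on_compact hK2comp
      ((continuous_norm.comp hcont).continuousOn) hpos
    exact ⟨d, hd, fun μ h1 h2 h3 v hv =>
      hdmin (μ, v) ⟨h1, h2, h3, by simpa [Metric.mem_sphere] using hv⟩⟩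
  -- choose ε₀ and extract the eventual entrywise bound
  set ε₀ := εS / (1 + 8 * CL * CR * (N:ℝ)^2) with hε₀def
  clear_value ε₀
  have hden : (0:ℝ) < 1 + 8 * CL * CR * (N:ℝ)^2 := by
    nlinarith [mul_nonneg (mul_nonneg (mul_nonneg (by norm_num : (0:ℝ) ≤ 8) hCL0) hCR0) (sq_nonneg (N:ℝ))]
  have hε₀ : 0 < ε₀ := by rw [hε₀def]; exact div_pos hεS hden
  have hev : ∀ᶠ α in nhdsWithin 0 (Set.Ici 0),
      ∀ i j, ‖M α i j - M₀ i j - α * M' i j‖ ≤ ε₀ * ‖α‖ :=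
    Filter.eventually_all.2 fun i => Filter.eventually_all.2 fun j => (hsmooth i j).def hε₀
  obtain ⟨ε₁, hε₁, hball⟩ := Metric.mem_nhdsWithin_iff.1 hev
  -- more constants
  set Q := CM' + (N:ℝ)^2 * ε₀ + ε₀ with hQ
  clear_value Q
  have hNsq : (0:ℝ) ≤ (N:ℝ)^2 * ε₀ := by positivity
  have hQ0 : 0 < Q := by rw [hQ]; linarith
  have hQbound : CM' + (N:ℝ)^2 * ε₀ ≤ Q := by rw [hQ]; linarith
  set C₁ := (1 + CR * CL) * Q with hC₁
  clear_value C₁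
  have hC₁0 : 0 < C₁ := by rw [hC₁]; exact mul_pos (by nlinarith [mul_nonneg hCR0 hCL0]) hQ0
  set D5 := 8 * CL * CM' * C₁ * CR with hD5
  clear_value D5
  have hD50 : 0 ≤ D5 := by
    rw [hD5]
    have h1 : (0:ℝ) ≤ 8 * CL * CM' := by nlinarith [mul_nonneg hCL0 hCM'0]
    nlinarith [mul_nonneg (mul_nonneg h1 (le_of_lt hC₁0)) hCR0]
  set αbar := min ε₁ (min (1/Q) (min (d/Q) (min (c/(4*C₁))
    (min (εS*c/(D5+1)) (2*δ/((CSc+1)^2+1)))))) with hαbar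
  clear_value αbar
  have hCSc1 : (0:ℝ) < (CSc+1)^2+1 := by positivity
  have hαbarpos : 0 < αbar := by
    rw [hαbar]
    refine lt_min hε₁ (lt_min (by simp [hQ0]) (lt_min (div_pos hd hQ0) (lt_min
      (div_pos hc (by linarith)) (lt_min (div_pos (mul_pos hεS hc) (by linarith))
      (div_pos (by linarith) hCSc1)))))
  refine ⟨αbar, hαbarpos, fun α hα μ hμ => ?_⟩
  obtain ⟨hα0, hαlt⟩ := hα
  rw [hαbar] at hαlt
  -- the six smallness conditions
  have cond1 : α < ε₁ := lt_of_lt_of_le hαlt (min_le_left _ _)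
  have cond2 : α * Q ≤ 1 := by
    have : α < 1/Q := lt_of_lt_of_le hαlt (le_trans (min_le_right _ _) (min_le_left _ _))
    rw [lt_div_iff₀ hQ0] at this; linarith only [this]
  have cond3 : α * Q < d := by
    have : α < d/Q := lt_of_lt_of_le hαlt (le_trans (min_le_right _ _)
      (le_trans (min_le_right _ _) (min_le_left _ _)))
    rw [lt_div_iff₀ hQ0] at this; linarith only [this]
  have cond4 : 2*C₁/c * α ≤ 1/2 := by
    have : α < c/(4*C₁) := lt_of_lt_of_le hαlt (le_trans (min_le_right _ _)
      (le_trans (min_le_right _ _) (le_trans (min_le_right _ _) (min_le_left _ _))))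
    rw [lt_div_iff₀ (by linarith only [hC₁0] : (0:ℝ) < 4*C₁)] at this
    rw [div_mul_eq_mul_div, div_le_div_iff₀ hc (by norm_num)]
    nlinarith only [this, hC₁0, hc, hα0]
  have cond5 : α * D5 < εS * c := by
    have h : α < εS*c/(D5+1) := lt_of_lt_of_le hαlt (le_trans (min_le_right _ _)
      (le_trans (min_le_right _ _) (le_trans (min_le_right _ _)
      (le_trans (min_le_right _ _) (min_le_left _ _)))))
    rw [lt_div_iff₀ (by linarith only [hD50] : (0:ℝ) < D5+1)] at h
    nlinarith only [h, hα0, hD50, mul_pos hεS hc]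
  have cond6 : α * (CSc+1)^2 < 2*δ := by
    have h : α < 2*δ/((CSc+1)^2+1) := lt_of_lt_of_le hαlt (le_trans (min_le_right _ _)
      (le_trans (min_le_right _ _) (le_trans (min_le_right _ _)
      (le_trans (min_le_right _ _) (min_le_right _ _)))))
    rw [lt_div_iff₀ hCSc1] at h
    nlinarith only [h, hα0]
  -- entry bounds at α
  have hentry : ∀ i j, ‖M α i j - M₀ i j - α * M' i j‖ ≤ ε₀ * α := by
    have : α ∈ Metric.ball (0:ℝ) ε₁ ∩ Set.Ici 0 := by
      constructor
      · rw [Metric.mem_ball, Real.dist_eq, sub_zero, abs_of_pos hα0]; exact cond1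
      · exact le_of_lt hα0
    have h2 := hball this
    intro i j
    have := h2 i j
    rwa [Real.norm_eq_abs (α), abs_of_pos hα0] at this
  by_contra hcon
  push_neg at hcon
  -- eigenvector
  obtain ⟨v, hv0, hvA⟩ := (mem_spectrum_iff_exists _ μ).1 hμ
  have hnv : 0 < ‖v‖ := norm_pos_iff.2 hv0
  set Ac := (M α).map φ with hAc
  set Ec := Ac - M₀c - (α:ℂ) • M'c with hEc
  -- bounds via entry sums
  have hLb : ∀ u : Fin N → ℂ, ‖Lc.mulVec u‖ ≤ CL * ‖u‖ := fun u => by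
    rw [hCL]; exact mulVec_norm_le Lc u
  have hRb : ∀ u : Fin l → ℂ, ‖Rc.mulVec u‖ ≤ CR * ‖u‖ := fun u => by
    rw [hCRdef]; exact mulVec_norm_le Rc u
  have hM'b : ∀ u : Fin N → ℂ, ‖M'c.mulVec u‖ ≤ CM' * ‖u‖ := fun u => by
    rw [hCM']; exact mulVec_norm_le M'c u
  have hM₀b : ∀ u : Fin N → ℂ, ‖M₀c.mulVec u‖ ≤ CM₀ * ‖u‖ := fun u => by
    rw [hCM₀]; exact mulVec_norm_le M₀c u
  have hSb : ∀ u : Fin l → ℂ, ‖Sc.mulVec u‖ ≤ CSc * ‖u‖ := fun u => by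
    rw [hCSc]; exact mulVec_norm_le Sc u
  -- entrywise bound on Ec
  have hEcentry : ∀ i j, ‖Ec i j‖ ≤ ε₀ * α := by
    intro i j
    have h1 : Ec i j = ((M α i j - M₀ i j - α * M' i j : ℝ) : ℂ) := by
      simp only [hEc, hAc, hM₀c, hM'c, Matrix.sub_apply, Matrix.smul_apply, Matrix.map_apply,
        hφ, Complex.coe_algebraMap, smul_eq_mul]
      push_cast
      ring
    rw [h1, Complex.norm_real, Real.norm_eq_abs]
    have := hentry i j
    rwa [Real.norm_eq_abs] at this
  have hEb : ∀ u : Fin N → ℂ, ‖Ec.mulVec u‖ ≤ (N:ℝ)^2 * ε₀ * α * ‖u‖ := by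
    intro u
    refine le_trans (mulVec_norm_le Ec u) (mul_le_mul_of_nonneg_right ?_ (norm_nonneg u))
    calc ∑ i, ∑ j, ‖Ec i j‖ ≤ ∑ i : Fin N, ∑ j : Fin N, ε₀ * α :=
        Finset.sum_le_sum fun i _ => Finset.sum_le_sum fun j _ => hEcentry i j
      _ = (N:ℝ)^2 * ε₀ * α := by
        simp [Finset.sum_const, Finset.card_univ]
        ring
  -- the perturbation vector G
  set G := ((α:ℂ) • M'c + Ec).mulVec v with hGdef
  have hG : ‖G‖ ≤ α * Q * ‖v‖ := by
    have h1 : G = (α:ℂ) • M'c.mulVec v + Ec.mulVec v := by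
      rw [hGdef, Matrix.add_mulVec, Matrix.smul_mulVec]
    calc ‖G‖ ≤ ‖(α:ℂ) • M'c.mulVec v‖ + ‖Ec.mulVec v‖ := h1 ▸ norm_add_le _ _
      _ ≤ α * (CM' * ‖v‖) + (N:ℝ)^2 * ε₀ * α * ‖v‖ := by
        rw [norm_smul, Complex.norm_real, Real.norm_eq_abs, abs_of_pos hα0]
        exact add_le_add (mul_le_mul_of_nonneg_left (hM'b v) (le_of_lt hα0)) (hEb v)
      _ = α * (CM' + (N:ℝ)^2 * ε₀) * ‖v‖ := by ring
      _ ≤ α * Q * ‖v‖ := by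
        have := mul_le_mul_of_nonneg_left hQbound (le_of_lt hα0)
        exact mul_le_mul_of_nonneg_right this (norm_nonneg v)
  have hαQ : 0 ≤ α * Q := le_of_lt (mul_pos hα0 hQ0)
  -- the eigen equation decomposed
  have hM₀v : M₀c.mulVec v = μ • v - G := by
    have hAeq : Ac = M₀c + ((α:ℂ) • M'c + Ec) := by rw [hEc]; abel
    have : M₀c.mulVec v + G = μ • v := by
      rw [hGdef, ← Matrix.add_mulVec, ← hAeq]; exact hvA
    linear_combination (norm := module) this
  -- |μ| ≤ B
  have hμB : ‖μ‖ ≤ B := by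
    have h1 : ‖μ • v‖ ≤ (CM₀ + 1) * ‖v‖ := by
      have : μ • v = M₀c.mulVec v + G := by rw [hM₀v]; abel
      calc ‖μ • v‖ ≤ ‖M₀c.mulVec v‖ + ‖G‖ := this ▸ norm_add_le _ _
        _ ≤ CM₀ * ‖v‖ + α * Q * ‖v‖ := add_le_add (hM₀b v) hG
        _ ≤ (CM₀ + 1) * ‖v‖ := by nlinarith only [cond2, norm_nonneg v, hαQ]
    rw [norm_smul] at h1
    rw [hB]
    exact le_of_mul_le_mul_right (by linarith only [h1]) hnv
  -- |μ - 1| ≤ c/2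
  have hμ1 : ‖μ - 1‖ ≤ c / 2 := by
    by_contra hcc
    push_neg at hcc
    have hvhat : ‖(‖v‖⁻¹ • v : Fin N → ℂ)‖ = 1 := by
      rw [norm_smul, norm_inv, norm_norm, inv_mul_cancel₀ (ne_of_gt hnv)]
    have hD := hdest μ hcon hμB (le_of_lt hcc) _ hvhat
    have heq : M₀c.mulVec ((‖v‖⁻¹ : ℝ) • v) - μ • ((‖v‖⁻¹ : ℝ) • v) = (‖v‖⁻¹ : ℝ) • (-G) := by
      rw [Matrix.mulVec_smul, hM₀v, smul_comm μ (‖v‖⁻¹ : ℝ) v, ← smul_sub]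
      congr 1
      abel
    rw [heq] at hD
    rw [norm_smul, norm_inv, norm_norm, norm_neg] at hD
    have : d ≤ α * Q := by
      calc d ≤ ‖v‖⁻¹ * ‖G‖ := hD
        _ ≤ ‖v‖⁻¹ * (α * Q * ‖v‖) := by
            exact mul_le_mul_of_nonneg_left hG (le_of_lt (inv_pos.2 hnv))
        _ = α * Q := by field_simp
    linarith only [this, cond3]
  -- definitions of x and w
  set x := Lc.mulVec v with hx
  set w := v - Rc.mulVec x with hw
  have hLw : Lc.mulVec w = 0 := by
    rw [hw, Matrix.mulVec_sub, Matrix.mulVec_mulVec, hLRc, Matrix.one_mulVec, ← hx, sub_self]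
  have hLG : Lc.mulVec G = μ • x - x := by
    have h1 : Lc.mulVec (M₀c.mulVec v) = x := by
      rw [Matrix.mulVec_mulVec, hleftc, ← hx]
    rw [hM₀v, Matrix.mulVec_sub, Matrix.mulVec_smul, ← hx] at h1
    linear_combination (norm := module) - h1
  have hkey : M₀c.mulVec w - μ • w = Rc.mulVec (Lc.mulVec G) - G := by
    have h1 : M₀c.mulVec w = (μ • v - G) - Rc.mulVec x := by
      rw [hw, Matrix.mulVec_sub, hM₀v, Matrix.mulVec_mulVec, hrightc]
    have h2 : Rc.mulVec (Lc.mulVec G) = μ • Rc.mulVec x - Rc.mulVec x := by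
      rw [hLG, Matrix.mulVec_sub, Matrix.mulVec_smul]
    rw [h1, h2, hw]
    rw [smul_sub]
    abel
  -- bound on w
  have hwb : ‖w‖ ≤ 2 * C₁ / c * α * ‖v‖ := by
    have hub : ‖M₀c.mulVec w - μ • w‖ ≤ C₁ * α * ‖v‖ := by
      calc ‖M₀c.mulVec w - μ • w‖ ≤ ‖Rc.mulVec (Lc.mulVec G)‖ + ‖G‖ :=
          hkey ▸ norm_sub_le _ _
        _ ≤ CR * (CL * ‖G‖) + ‖G‖ := by
            refine add_le_add (le_trans (hRb _) ?_) le_rfl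
            exact mul_le_mul_of_nonneg_left (hLb G) hCR0
        _ = (1 + CR * CL) * ‖G‖ := by ring
        _ ≤ (1 + CR * CL) * (α * Q * ‖v‖) := by
            refine mul_le_mul_of_nonneg_left hG ?_
            nlinarith only [mul_nonneg hCR0 hCL0]
        _ = C₁ * α * ‖v‖ := by rw [hC₁]; ring
    have hlb : c * ‖w‖ - c/2 * ‖w‖ ≤ ‖M₀c.mulVec w - μ • w‖ := by
      have t1 : c * ‖w‖ ≤ ‖M₀c.mulVec w - w‖ := hcest w hLw
      have t2 : ‖M₀c.mulVec w - w‖ ≤ ‖M₀c.mulVec w - μ • w‖ + ‖μ • w - w‖ :=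
        norm_sub_le_norm_sub_add_norm_sub _ _ _
      have t3 : ‖μ • w - w‖ ≤ c/2 * ‖w‖ := by
        have : μ • w - w = (μ - 1) • w := by rw [sub_smul, one_smul]
        rw [this, norm_smul]
        exact mul_le_mul_of_nonneg_right hμ1 (norm_nonneg w)
      linarith only [t1, t2, t3]
    have h3 := le_trans hlb hub
    rw [show 2 * C₁ / c * α * ‖v‖ = 2 * C₁ * α * ‖v‖ / c by ring, le_div_iff₀ hc]
    nlinarith only [h3, hc, norm_nonneg w]
  -- |v| ≤ 2 CR |x|
  have hvx : ‖v‖ ≤ 2 * CR * ‖x‖ := by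
    have h1 : ‖v‖ ≤ CR * ‖x‖ + ‖w‖ := by
      have : v = Rc.mulVec x + w := by rw [hw]; abel
      calc ‖v‖ ≤ ‖Rc.mulVec x‖ + ‖w‖ := this ▸ norm_add_le _ _
        _ ≤ CR * ‖x‖ + ‖w‖ := add_le_add (hRb x) le_rfl
    have h2 : ‖w‖ ≤ 1/2 * ‖v‖ := by
      refine le_trans hwb ?_
      exact mul_le_mul_of_nonneg_right cond4 (norm_nonneg v)
    linarith only [h1, h2]
  have hnx : 0 < ‖x‖ := by nlinarith only [hvx, hnv, hCR0]
  -- define ν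
  set ν := (μ - 1) / (α:ℂ) with hν
  have hαC : (α:ℂ) ≠ 0 := by
    simp only [ne_eq, Complex.ofReal_eq_zero]
    exact ne_of_gt hα0
  have hμν : μ = 1 + (α:ℂ) * ν := by
    rw [hν]; field_simp; ring
  -- estimate on Sc x - ν x
  have hvRw : v = Rc.mulVec x + w := by rw [hw]; abel
  have hGsplit : G = (α:ℂ) • M'c.mulVec (Rc.mulVec x) + (α:ℂ) • M'c.mulVec w
      + Ec.mulVec v := by
    rw [hGdef, Matrix.add_mulVec, Matrix.smul_mulVec]
    have hm : M'c.mulVec v = M'c.mulVec (Rc.mulVec x) + M'c.mulVec w := by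
      rw [← Matrix.mulVec_add, ← hvRw]
    rw [hm, smul_add]
  have hLG2 : Lc.mulVec G = (α:ℂ) • Sc.mulVec x + ((α:ℂ) • Lc.mulVec (M'c.mulVec w)
      + Lc.mulVec (Ec.mulVec v)) := by
    rw [hGsplit, Matrix.mulVec_add, Matrix.mulVec_add, Matrix.mulVec_smul, Matrix.mulVec_smul]
    have hLMR : Lc.mulVec (M'c.mulVec (Rc.mulVec x)) = Sc.mulVec x := by
      rw [Matrix.mulVec_mulVec, Matrix.mulVec_mulVec, ← hScc]
    rw [hLMR, add_assoc]
  have hνx : ν • x = (α:ℂ)⁻¹ • Lc.mulVec G := by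
    rw [hLG]
    have h1 : μ • x - x = (μ - 1) • x := by rw [sub_smul, one_smul]
    rw [h1, smul_smul, hν]
    congr 1
    field_simp
  have hSxid : Sc.mulVec x - ν • x =
      -(Lc.mulVec (M'c.mulVec w)) - (α:ℂ)⁻¹ • Lc.mulVec (Ec.mulVec v) := by
    rw [hνx, hLG2, smul_add, smul_add, smul_smul, smul_smul, inv_mul_cancel₀ hαC, one_smul,
      one_smul]
    abel
  -- bound the two error terms
  have hterm1 : ‖Lc.mulVec (M'c.mulVec w)‖ ≤ 4 * CL * CM' * C₁ * CR / c * α * ‖x‖ := by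
    calc ‖Lc.mulVec (M'c.mulVec w)‖ ≤ CL * (CM' * ‖w‖) :=
        le_trans (hLb _) (mul_le_mul_of_nonneg_left (hM'b w) hCL0)
      _ ≤ CL * (CM' * (2 * C₁ / c * α * ‖v‖)) := by
          refine mul_le_mul_of_nonneg_left (mul_le_mul_of_nonneg_left hwb hCM'0) hCL0
      _ ≤ CL * (CM' * (2 * C₁ / c * α * (2 * CR * ‖x‖))) := by
          have hcoef : 0 ≤ 2 * C₁ / c * α := by
            have := div_nonneg (by linarith only [hC₁0] : (0:ℝ) ≤ 2*C₁) (le_of_lt hc)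
            exact mul_nonneg this (le_of_lt hα0)
          refine mul_le_mul_of_nonneg_left (mul_le_mul_of_nonneg_left
            (mul_le_mul_of_nonneg_left hvx hcoef) hCM'0) hCL0
      _ = 4 * CL * CM' * C₁ * CR / c * α * ‖x‖ := by ring
  have hterm2 : ‖(α:ℂ)⁻¹ • Lc.mulVec (Ec.mulVec v)‖ ≤ 2 * CL * CR * (N:ℝ)^2 * ε₀ * ‖x‖ := by
    have h1 : ‖(α:ℂ)⁻¹‖ = α⁻¹ := by
      rw [norm_inv, Complex.norm_real, Real.norm_eq_abs, abs_of_pos hα0]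
    calc ‖(α:ℂ)⁻¹ • Lc.mulVec (Ec.mulVec v)‖ = α⁻¹ * ‖Lc.mulVec (Ec.mulVec v)‖ := by
          rw [norm_smul, h1]
      _ ≤ α⁻¹ * (CL * ((N:ℝ)^2 * ε₀ * α * ‖v‖)) := by
          refine mul_le_mul_of_nonneg_left (le_trans (hLb _)
            (mul_le_mul_of_nonneg_left (hEb v) hCL0)) (le_of_lt (inv_pos.2 hα0))
      _ = CL * (N:ℝ)^2 * ε₀ * ‖v‖ := by field_simp
      _ ≤ CL * (N:ℝ)^2 * ε₀ * (2 * CR * ‖x‖) := by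
          refine mul_le_mul_of_nonneg_left hvx ?_
          have := mul_nonneg (mul_nonneg hCL0 (sq_nonneg (N:ℝ))) (le_of_lt hε₀)
          nlinarith only [this]
      _ = 2 * CL * CR * (N:ℝ)^2 * ε₀ * ‖x‖ := by ring
  have hε₀eq : ε₀ * (1 + 8 * CL * CR * (N:ℝ)^2) = εS := by
    rw [hε₀def]; field_simp
  have hXnn : 0 ≤ CL * CR * (N:ℝ)^2 := mul_nonneg (mul_nonneg hCL0 hCR0) (sq_nonneg _)
  have hsmall2 : 2 * CL * CR * (N:ℝ)^2 * ε₀ ≤ εS / 2 := by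
    nlinarith only [hε₀eq, hε₀, hXnn, mul_nonneg hXnn (le_of_lt hε₀)]
  have hsmall1 : 4 * CL * CM' * C₁ * CR / c * α < εS / 2 := by
    rw [div_mul_eq_mul_div, div_lt_iff₀ hc]
    rw [hD5] at cond5
    nlinarith only [cond5]
  have hSνx : ‖Sc.mulVec x - ν • x‖ < εS * ‖x‖ := by
    calc ‖Sc.mulVec x - ν • x‖
        ≤ ‖Lc.mulVec (M'c.mulVec w)‖ + ‖(α:ℂ)⁻¹ • Lc.mulVec (Ec.mulVec v)‖ := by
          rw [hSxid]
          rw [show -(Lc.mulVec (M'c.mulVec w)) - (α:ℂ)⁻¹ • Lc.mulVec (Ec.mulVec v) =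
            -((Lc.mulVec (M'c.mulVec w)) + (α:ℂ)⁻¹ • Lc.mulVec (Ec.mulVec v)) by abel, norm_neg]
          exact norm_add_le _ _
      _ ≤ 4 * CL * CM' * C₁ * CR / c * α * ‖x‖ + 2 * CL * CR * (N:ℝ)^2 * ε₀ * ‖x‖ :=
          add_le_add hterm1 hterm2
      _ < εS * ‖x‖ := by nlinarith only [hsmall1, hsmall2, hnx]
  -- ν has real part < -δ
  have hre : ν.re < -δ := by
    by_contra hrec
    push_neg at hrec
    have hxhat : ‖((‖x‖⁻¹ : ℝ) • x : Fin l → ℂ)‖ = 1 := by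
      rw [norm_smul, norm_inv, norm_norm, inv_mul_cancel₀ (ne_of_gt hnx)]
    have hg := hgap ν _ hxhat hrec
    have heq : Sc.mulVec ((‖x‖⁻¹ : ℝ) • x) - ν • ((‖x‖⁻¹ : ℝ) • x)
        = (‖x‖⁻¹ : ℝ) • (Sc.mulVec x - ν • x) := by
      rw [Matrix.mulVec_smul, smul_comm ν (‖x‖⁻¹ : ℝ) x, ← smul_sub]
    rw [heq, norm_smul, norm_inv, norm_norm] at hg
    have : εS * ‖x‖ ≤ ‖Sc.mulVec x - ν • x‖ := by
      rw [show εS * ‖x‖ = ‖x‖ * εS by ring]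
      rw [show ‖Sc.mulVec x - ν • x‖ = ‖x‖ * (‖x‖⁻¹ * ‖Sc.mulVec x - ν • x‖) by
        field_simp]
      exact mul_le_mul_of_nonneg_left hg (le_of_lt hnx)
    linarith only [this, hSνx]
  -- |ν| is bounded
  have hνb : ‖ν‖ ≤ CSc + 1 := by
    have h1 : ‖ν • x‖ ≤ (CSc + 1) * ‖x‖ := by
      calc ‖ν • x‖ = ‖Sc.mulVec x - (Sc.mulVec x - ν • x)‖ := by congr 1; abel
        _ ≤ ‖Sc.mulVec x‖ + ‖Sc.mulVec x - ν • x‖ := norm_sub_le _ _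
        _ ≤ CSc * ‖x‖ + εS * ‖x‖ := add_le_add (hSb x) (le_of_lt hSνx)
        _ ≤ (CSc + 1) * ‖x‖ := by nlinarith only [hεS1, norm_nonneg x]
    rw [norm_smul] at h1
    exact le_of_mul_le_mul_right h1 hnx
  -- final contradiction
  have h2 : 1 ≤ ‖μ‖^2 := by nlinarith only [hcon, norm_nonneg μ]
  have hresq : ‖μ‖^2 = (1 + α * ν.re)^2 + (α * ν.im)^2 := by
    rw [hμν, Complex.sq_norm, Complex.normSq_apply]
    simp only [Complex.add_re, Complex.add_im, Complex.one_re, Complex.one_im, Complex.mul_re,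
      Complex.mul_im, Complex.ofReal_re, Complex.ofReal_im]
    ring
  have hν2 : ν.re * ν.re + ν.im * ν.im ≤ (CSc + 1)^2 := by
    have h3 : ‖ν‖^2 ≤ (CSc + 1)^2 := by nlinarith only [hνb, norm_nonneg ν]
    rwa [Complex.sq_norm, Complex.normSq_apply] at h3
  have q1 : α^2 * (ν.re * ν.re + ν.im * ν.im) ≤ α^2 * (CSc + 1)^2 :=
    mul_le_mul_of_nonneg_left hν2 (sq_nonneg α)
  have q2 : α * (α * (CSc + 1)^2) < α * (2 * δ) := mul_lt_mul_of_pos_left cond6 hα0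
  have p1 : α * ν.re < α * (-δ) := mul_lt_mul_of_pos_left hre hα0
  nlinarith only [h2, hresq, q1, q2, p1]
end
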